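/- The piecewise function κ(P) defined by κ = b - P for P ≥ b + c; κ = (b - P)S_b(P) for b < P < b + c; κ = 0 for a ≤ P ≤ b; κ = (a - P)S_a(P) for a - c < P < a; κ = a - P for P ≤ a - c, with S_a, S_b the tanh-based switching functions of Definition, is continuous on ℝ. -/

import Mathlib

open Real Filter Topology

private lemma tanh_eq' (x : ℝ) : Real.tanh x = (Real.exp (2*x) - 1) / (Real.exp (2*x) + 1) := by
  rw [Real.tanh_eq_sinh_div_cosh, Real.sinh_eq, Real.cosh_eq, Real.exp_neg,
    show (2:ℝ)*x = x + x by ring, Real.exp_add]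
  have h1 : Real.exp x ≠ 0 := (Real.exp_pos x).ne'
  have h2 : Real.exp x * Real.exp x + 1 ≠ 0 := by positivity
  field_simp

private lemma continuous_tanh' : Continuous Real.tanh := by
  have : Real.tanh = fun x => Real.sinh x / Real.cosh x := by
    funext x; exact Real.tanh_eq_sinh_div_cosh x
  rw [this]
  exact Real.continuous_sinh.div Real.continuous_cosh fun x => (Real.cosh_pos x).ne'

private lemma abs_tanh_le_one (x : ℝ) : |Real.tanh x| ≤ 1 := by
  rw [tanh_eq', abs_div, abs_of_pos (by positivity : (0:ℝ) < Real.exp (2*x) + 1),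
    div_le_one (by positivity)]
  have := Real.exp_pos (2*x)
  rcases abs_cases (Real.exp (2*x) - 1) with ⟨h, _⟩ | ⟨h, _⟩ <;> linarith

private lemma tendsto_tanh_atBot : Tendsto Real.tanh atBot (𝓝 (-1)) := by
  have h1 : Tendsto (fun x : ℝ => Real.exp (2*x)) atBot (𝓝 0) :=
    Real.tendsto_exp_atBot.comp (tendsto_id.const_mul_atBot two_pos)
  have h2 : Tendsto (fun u : ℝ => (u - 1) / (u + 1)) (𝓝 0) (𝓝 (-1)) := by
    have : ContinuousAt (fun u : ℝ => (u - 1) / (u + 1)) 0 :=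
      ContinuousAt.div (by fun_prop) (by fun_prop) (by norm_num)
    simpa using this.tendsto
  have := h2.comp h1
  refine this.congr fun x => ?_
  simp [tanh_eq']

/-- The half-ramp function is continuous. -/
private lemma ramp_continuous (p q : ℝ) (hpq : p < q) :
    Continuous (fun x => if q ≤ x then (0:ℝ) else if p < x then
      (q - x) * ((1/2) * (1 - Real.tanh (1/(p - x) + 1/(q - x)))) else q - x) := by
  set f : ℝ → ℝ := fun x => if q ≤ x then (0:ℝ) else if p < x then
      (q - x) * ((1/2) * (1 - Real.tanh (1/(p - x) + 1/(q - x)))) else q - x with hf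
  have hbound : ∀ y, |f y| ≤ |q - y| := by
    intro y
    simp only [hf]
    split_ifs with h1 h2
    · simp
    · rw [abs_mul]
      have ht := abs_tanh_le_one (1/(p - y) + 1/(q - y))
      rw [abs_le] at ht
      calc |q - y| * |(1/2) * (1 - Real.tanh (1/(p - y) + 1/(q - y)))|
          ≤ |q - y| * 1 := by
            refine mul_le_mul_of_nonneg_left ?_ (abs_nonneg _)
            rw [abs_le]; constructor <;> [nlinarith; nlinarith]
        _ = |q - y| := mul_one _
    · exact le_refl _
  rw [continuous_iff_continuousAt]
  intro x
  rcases lt_trichotomy x p with hxp | hxp | hxp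
  · -- x < p : f = q - · near x
    have hev : f =ᶠ[𝓝 x] fun y => q - y := by
      filter_upwards [Iio_mem_nhds hxp] with y hy
      simp only [Set.mem_Iio] at hy
      simp only [hf]
      rw [if_neg (by linarith), if_neg (by linarith)]
    exact ContinuousAt.congr (continuousAt_const.sub continuousAt_id) hev.symm
  · -- x = p
    subst hxp
    have hfx : f x = q - x := by
      simp only [hf]; rw [if_neg (by linarith), if_neg (lt_irrefl x)]
    unfold ContinuousAt
    rw [hfx, ← nhdsLE_sup_nhdsGT x, tendsto_sup]
    constructor
    · -- from the left, f = q - ·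
      have hev : f =ᶠ[𝓝[≤] x] fun y => q - y := by
        filter_upwards [self_mem_nhdsWithin] with y hy
        simp only [Set.mem_Iic] at hy
        simp only [hf]
        rw [if_neg (by linarith), if_neg (by linarith)]
      have ht : Tendsto (fun y : ℝ => q - y) (𝓝[≤] x) (𝓝 (q - x)) :=
        tendsto_nhdsWithin_of_tendsto_nhds
          ((continuousAt_const.sub continuousAt_id).tendsto)
      exact ht.congr' hev.symm
    · -- from the right: f = (q-·)*S and S → 1
      have hev : f =ᶠ[𝓝[>] x] fun y =>
          (q - y) * ((1/2) * (1 - Real.tanh (1/(x - y) + 1/(q - y)))) := by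
        filter_upwards [Ioo_mem_nhdsGT_of_mem ⟨le_refl x, hpq⟩] with y hy
        simp only [Set.mem_Ioo] at hy
        simp only [hf]
        rw [if_neg (by linarith), if_pos hy.1]
      have harg : Tendsto (fun y => 1/(x - y) + 1/(q - y)) (𝓝[>] x) atBot := by
        have h1 : Tendsto (fun y => 1/(x - y)) (𝓝[>] x) atBot := by
          have hneg : Tendsto (fun y => x - y) (𝓝[>] x) (𝓝[<] 0) := by
            apply tendsto_nhdsWithin_of_tendsto_nhds_of_eventually_within
            · have h : Tendsto (fun y : ℝ => x - y) (𝓝[>] x) (𝓝 (x - x)) :=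
                tendsto_nhdsWithin_of_tendsto_nhds
                  ((continuousAt_const.sub continuousAt_id).tendsto)
              simpa using h
            · filter_upwards [self_mem_nhdsWithin] with y hy
              simp only [Set.mem_Ioi] at hy
              simp only [Set.mem_Iio]; linarith
          have hinv : Tendsto (fun z : ℝ => z⁻¹) (𝓝[<] (0:ℝ)) atBot := by
            have := tendsto_inv_nhdsGT_zero (𝕜 := ℝ)
            have hcomp : Tendsto (fun z : ℝ => -z) (𝓝[<] (0:ℝ)) (𝓝[>] (0:ℝ)) := by
              apply tendsto_nhdsWithin_of_tendsto_nhds_of_eventually_within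
              · have h : Tendsto (fun z : ℝ => -z) (𝓝[<] (0:ℝ)) (𝓝 (-0)) :=
                  tendsto_nhdsWithin_of_tendsto_nhds continuousAt_neg.tendsto
                simpa using h
              · filter_upwards [self_mem_nhdsWithin] with z hz
                simp only [Set.mem_Iio] at hz
                simp only [Set.mem_Ioi]; linarith
            have h1 := this.comp hcomp
            have h2 : Tendsto (fun z : ℝ => -(-z)⁻¹) (𝓝[<] (0:ℝ)) atBot :=
              tendsto_neg_atTop_atBot.comp h1
            refine h2.congr fun z => ?_
            rw [inv_neg, neg_neg]
          simpa [one_div, Function.comp_def] using hinv.comp hneg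
        have h2 : Tendsto (fun y => 1/(q - y)) (𝓝[>] x) (𝓝 (1/(q - x))) := by
          apply tendsto_nhdsWithin_of_tendsto_nhds
          exact ContinuousAt.tendsto (by
            apply ContinuousAt.div (by fun_prop) (by fun_prop)
            intro h; exact absurd h (by intro hh; nlinarith [hpq]))
        exact h1.atBot_add h2
      have hS : Tendsto (fun y => (q - y) * ((1/2) * (1 - Real.tanh (1/(x - y) + 1/(q - y)))))
          (𝓝[>] x) (𝓝 (q - x)) := by
        have htanh : Tendsto (fun y => Real.tanh (1/(x - y) + 1/(q - y))) (𝓝[>] x)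
            (𝓝 (-1)) := tendsto_tanh_atBot.comp harg
        have hsub : Tendsto (fun y => (1:ℝ) - Real.tanh (1/(x - y) + 1/(q - y))) (𝓝[>] x)
            (𝓝 ((1:ℝ) - (-1))) := tendsto_const_nhds.sub htanh
        have h1 : Tendsto (fun y => (1/2 : ℝ) * (1 - Real.tanh (1/(x - y) + 1/(q - y))))
            (𝓝[>] x) (𝓝 1) := by
          have h := hsub.const_mul (1/2 : ℝ)
          convert h using 2
          norm_num
        have h2 : Tendsto (fun y => q - y) (𝓝[>] x) (𝓝 (q - x)) :=
          tendsto_nhdsWithin_of_tendsto_nhds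
            ((continuousAt_const.sub continuousAt_id).tendsto)
        simpa using h2.mul h1
      exact hS.congr' hev.symm
  · rcases lt_trichotomy x q with hxq | hxq | hxq
    · -- p < x < q : f = (q-·)*S near x, continuous since denominators nonzero
      have hev : f =ᶠ[𝓝 x] fun y =>
          (q - y) * ((1/2) * (1 - Real.tanh (1/(p - y) + 1/(q - y)))) := by
        filter_upwards [Ioo_mem_nhds hxp hxq] with y hy
        simp only [hf]
        rw [if_neg (by linarith [hy.2]), if_pos hy.1]
      refine ContinuousAt.congr ?_ hev.symm
      have hp : p - x ≠ 0 := by intro h; nlinarith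
      have hq : q - x ≠ 0 := by intro h; nlinarith
      apply ContinuousAt.mul (by fun_prop)
      apply ContinuousAt.mul continuousAt_const
      apply ContinuousAt.sub continuousAt_const
      apply continuous_tanh'.continuousAt.comp
      exact ContinuousAt.add
        (ContinuousAt.div (by fun_prop) (by fun_prop) hp)
        (ContinuousAt.div (by fun_prop) (by fun_prop) hq)
    · -- x = q : squeeze
      subst hxq
      have hfx : f x = 0 := by simp only [hf]; rw [if_pos (le_refl x)]
      unfold ContinuousAt
      rw [hfx]
      apply squeeze_zero_norm (fun y => by simpa [Real.norm_eq_abs] using hbound y)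
      have h : Tendsto (fun y : ℝ => x - y) (𝓝 x) (𝓝 (x - x)) :=
        (continuousAt_const.sub continuousAt_id).tendsto
      rw [sub_self] at h
      simpa using h.abs
    · -- q < x : f = 0 near x
      have hev : f =ᶠ[𝓝 x] fun _ => (0:ℝ) := by
        filter_upwards [Ioi_mem_nhds hxq] with y hy
        simp only [Set.mem_Ioi] at hy
        simp only [hf]; rw [if_pos (le_of_lt hy)]
      exact ContinuousAt.congr continuousAt_const hev.symm

theorem kappa_continuous (a b c : ℝ)
    (hac : 0 < a - c) (hab : a ≤ b) (hc : 0 < c)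
    (Sa Sb κ : ℝ → ℝ)
    (hSa : ∀ x, Sa x = (1/2) * (1 - Real.tanh (1/(a - c - x) + 1/(a - x))))
    (hSb : ∀ x, Sb x = (1/2) * (1 + Real.tanh (1/(b - x) + 1/(b + c - x))))
    (hκ : ∀ P, κ P = if b + c ≤ P then b - P
          else if b < P then (b - P) * Sb P
          else if a ≤ P then 0
          else if a - c < P then (a - P) * Sa P
          else a - P) :
    Continuous κ := by
  have h1 := ramp_continuous (a - c) a (by linarith)
  have h2 := ramp_continuous (-(b+c)) (-b) (by linarith)
  have key : κ = fun P =>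
      (if a ≤ P then (0:ℝ) else if a - c < P then
        (a - P) * ((1/2) * (1 - Real.tanh (1/(a - c - P) + 1/(a - P)))) else a - P)
      + (-(if -b ≤ -P then (0:ℝ) else if -(b+c) < -P then
        (-b - (-P)) * ((1/2) * (1 - Real.tanh (1/(-(b+c) - (-P)) + 1/(-b - (-P))))) else -b - (-P))) := by
    funext P
    rw [hκ P]
    by_cases hbc : b + c ≤ P
    · rw [if_pos hbc, if_pos (show a ≤ P by linarith),
        if_neg (show ¬ -b ≤ -P by simp; linarith),
        if_neg (show ¬ -(b+c) < -P by simp; linarith)]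
      ring
    · push_neg at hbc
      by_cases hb : b < P
      · rw [if_neg (by linarith), if_pos hb, if_pos (show a ≤ P by linarith),
          if_neg (show ¬ -b ≤ -P by simp; linarith),
          if_pos (show -(b+c) < -P by simp; linarith)]
        rw [hSb P, show -(b+c) - -P = -(b + c - P) by ring,
          show -b - -P = -(b - P) by ring, div_neg, div_neg,
          show -(1/(b+c-P)) + -(1/(b-P)) = -(1/(b - P) + 1/(b + c - P)) by ring,
          Real.tanh_neg]
        ring
      · push_neg at hb
        by_cases ha : a ≤ P
        · rw [if_neg (by linarith), if_neg (by linarith), if_pos ha, if_pos ha,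
            if_pos (show -b ≤ -P by simp; linarith)]
          ring
        · push_neg at ha
          by_cases hacP : a - c < P
          · rw [if_neg (by linarith), if_neg (by linarith), if_neg (by linarith),
              if_pos hacP, if_neg (not_le.mpr ha), if_pos hacP,
              if_pos (show -b ≤ -P by simp; linarith)]
            rw [hSa P]
            ring
          · rw [if_neg (by linarith), if_neg (by linarith), if_neg (by linarith),
              if_neg hacP, if_neg (show ¬ a ≤ P by linarith), if_neg hacP,
              if_pos (show -b ≤ -P by simp; linarith)]
            ring
  rw [key]
  exact h1.add ((h2.comp continuous_neg).neg)
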